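/- arXiv:2506.14893 — 5 statements merged into one kernel-verified Lean document; each statement's English description precedes it below -/
import Mathlib

section
/- For nonzero complex numbers λ₁, λ₂ with λ₁ ≠ λ₂, the 4×4 matrix with rows (1,1,0,0), (λ₁,λ₂,-λ₁,λ₂), (λ₁²,λ₂²,-2λ₁²,2λ₂²), (λ₁³,λ₂³,-3λ₁³,3λ₂³) is invertible. -/
/-! Column `k` of the matrix is `(x ^ k)`, `(y ^ k)`, `(-k x ^ k)`, `(k y ^ k)`: a confluent Vandermonde
matrix with two double nodes `x, y`, whose derivative columns are scaled by `-x` and `y`. Its determinant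
is therefore `x * y * (x - y) ^ 4`, nonzero for distinct nonzero nodes. -/

theorem det_confluentVandermonde_two_double_nodes {R : Type*} [CommRing R] (x y : R) :
    (!![(1 : R), 1, 0, 0;
        x, y, -x, y;
        x^2, y^2, -2*x^2, 2*y^2;
        x^3, y^3, -3*x^3, 3*y^3]).det = x * y * (x - y) ^ 4 := by
  simp [Matrix.det_succ_row_zero, Fin.sum_univ_succ, Fin.succAbove]
  ring

theorem stmt2 (l1 l2 : ℂ) (h1 : l1 ≠ 0) (h2 : l2 ≠ 0) (h12 : l1 ≠ l2) :
    IsUnit (!![(1 : ℂ), 1, 0, 0;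
               l1, l2, -l1, l2;
               l1^2, l2^2, -2*l1^2, 2*l2^2;
               l1^3, l2^3, -3*l1^3, 3*l2^3]) := by
  rw [Matrix.isUnit_iff_isUnit_det, det_confluentVandermonde_two_double_nodes, isUnit_iff_ne_zero]
  exact mul_ne_zero (mul_ne_zero h1 h2) (pow_ne_zero _ (sub_ne_zero.mpr h12))
end

section
/- Let λ be a nonzero complex number and α₁, α₂ complex numbers. Define two W-module structures on ℂ[Y]: in Ω(λ,αᵢ), L_m acts on f(Y) by λ^m(Y + m·αᵢ)·f(Y-m). Then the subspace U of ℂ[Y]⊗ℂ[Y] spanned by { Σ_{t=0}^{j} C(j,t) · Y^{j-t} ⊗ Y^t : j ∈ ℕ } is invariant under the diagonal action of every L_m on the tensor product module Ω(λ,α₁)⊗Ω(λ,α₂); that is, U is a proper nonzero submodule, so the tensor product module is reducible. -/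
open scoped TensorProduct

/-- The action of the Witt algebra element `L_m` on `ℂ[Y]` in the module `Ω(λ, α)`:
`L_m f(Y) = λ^m (Y + mα) f(Y - m)`. -/
noncomputable def wittL (lam al : ℂ) (m : ℤ) : Polynomial ℂ →ₗ[ℂ] Polynomial ℂ :=
  lam ^ m • (LinearMap.mulLeft ℂ (Polynomial.X + Polynomial.C ((m : ℂ) * al)) ∘ₗ
    (Polynomial.aeval (Polynomial.X - Polynomial.C (m : ℂ)) :
      Polynomial ℂ →ₐ[ℂ] Polynomial ℂ).toLinearMap)

/-- The diagonal action of `L_m` on the tensor product module `Ω(λ,α₁) ⊗ Ω(λ,α₂)`. -/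
noncomputable def wittLtensor (lam a1 a2 : ℂ) (m : ℤ) :
    Polynomial ℂ ⊗[ℂ] Polynomial ℂ →ₗ[ℂ] Polynomial ℂ ⊗[ℂ] Polynomial ℂ :=
  TensorProduct.map (wittL lam a1 m) LinearMap.id +
    TensorProduct.map LinearMap.id (wittL lam a2 m)

/-- The subspace `U = span{ Σ_{t=0}^{j} C(j,t) Y^{j-t} ⊗ Y^t : j ∈ ℕ }`. -/
noncomputable def wittU : Submodule ℂ (Polynomial ℂ ⊗[ℂ] Polynomial ℂ) :=
  Submodule.span ℂ {u | ∃ j : ℕ, u = ∑ t ∈ Finset.range (j + 1), (j.choose t : ℂ) •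
    ((Polynomial.X ^ (j - t) : Polynomial ℂ) ⊗ₜ[ℂ] (Polynomial.X ^ t : Polynomial ℂ))}

open Polynomial

/-- The element `Y₁ + Y₂` of the tensor ring. -/
noncomputable def wittS : Polynomial ℂ ⊗[ℂ] Polynomial ℂ := (1 : ℂ[X]) ⊗ₜ X + X ⊗ₜ 1

lemma wittS_pow (j : ℕ) : wittS ^ j = ∑ t ∈ Finset.range (j + 1), (j.choose t : ℂ) •
    ((Polynomial.X ^ (j - t) : Polynomial ℂ) ⊗ₜ[ℂ] (Polynomial.X ^ t : Polynomial ℂ)) := by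
  rw [wittS, add_pow]
  refine Finset.sum_congr rfl fun t ht => ?_
  simp only [Algebra.TensorProduct.tmul_pow, Algebra.TensorProduct.tmul_mul_tmul, one_pow,
    mul_one, one_mul]
  rw [mul_comm, ← nsmul_eq_mul, ← Nat.cast_smul_eq_nsmul ℂ]

lemma wittS_pow_mem (j : ℕ) : wittS ^ j ∈ wittU :=
  Submodule.subset_span ⟨j, wittS_pow j⟩

lemma wittShift_pow_mem (c : ℂ) (k : ℕ) :
    (wittS + algebraMap ℂ (Polynomial ℂ ⊗[ℂ] Polynomial ℂ) c) ^ k ∈ wittU := by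
  rw [add_pow]
  refine Submodule.sum_mem _ fun t ht => ?_
  have : wittS ^ t * algebraMap ℂ (Polynomial ℂ ⊗[ℂ] Polynomial ℂ) c ^ (k - t) *
        (k.choose t : _) = (c ^ (k - t) * (k.choose t : ℂ)) • wittS ^ t := by
    rw [← map_pow, mul_comm, ← nsmul_eq_mul, ← Nat.cast_smul_eq_nsmul ℂ,
      mul_comm (wittS ^ t), ← Algebra.smul_def, mul_comm (c ^ (k - t)), ← smul_smul]
  rw [this]
  exact Submodule.smul_mem _ _ (wittS_pow_mem t)

lemma wittL_monomial (lam al : ℂ) (m : ℤ) (k : ℕ) :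
    wittL lam al m (X ^ k) = lam ^ m •
      ((X + C ((m : ℂ) * al)) * (X - C (m : ℂ)) ^ k) := by
  simp [wittL]

lemma wittE1 (m : ℤ) : (1 : ℂ[X]) ⊗ₜ[ℂ] X + (X - C (m : ℂ)) ⊗ₜ[ℂ] (1 : ℂ[X])
    = wittS - algebraMap ℂ (Polynomial ℂ ⊗[ℂ] Polynomial ℂ) (m : ℂ) := by
  rw [wittS, Algebra.TensorProduct.algebraMap_apply, TensorProduct.sub_tmul]
  simp [algebraMap_eq]
  abel

lemma wittE2 (m : ℤ) : (1 : ℂ[X]) ⊗ₜ[ℂ] (X - C (m : ℂ)) + X ⊗ₜ[ℂ] (1 : ℂ[X])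
    = wittS - algebraMap ℂ (Polynomial ℂ ⊗[ℂ] Polynomial ℂ) (m : ℂ) := by
  rw [wittS, Algebra.TensorProduct.algebraMap_apply, TensorProduct.tmul_sub]
  have h : (C (m : ℂ) : ℂ[X]) = (m : ℂ) • 1 := by simp [Algebra.smul_def, algebraMap_eq]
  have h2 : algebraMap ℂ ℂ[X] (m : ℂ) = C (m : ℂ) := rfl
  rw [h2, h]
  simp only [TensorProduct.tmul_smul, TensorProduct.smul_tmul']
  abel

lemma wittH1 (lam a1 : ℂ) (m : ℤ) (j : ℕ) :
    TensorProduct.map (wittL lam a1 m) LinearMap.id (wittS ^ j) =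
      lam ^ m • (((X + C ((m : ℂ) * a1)) ⊗ₜ[ℂ] (1 : ℂ[X])) *
        ((1 : ℂ[X]) ⊗ₜ[ℂ] X + (X - C (m : ℂ)) ⊗ₜ[ℂ] (1 : ℂ[X])) ^ j) := by
  rw [wittS_pow, map_sum, add_pow, Finset.mul_sum, Finset.smul_sum]
  refine Finset.sum_congr rfl fun t ht => ?_
  rw [map_smul, TensorProduct.map_tmul, wittL_monomial]
  simp only [LinearMap.id_coe, id_eq, Algebra.TensorProduct.tmul_pow,
    Algebra.TensorProduct.tmul_mul_tmul, one_pow, mul_one, one_mul]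
  rw [mul_comm _ ((j.choose t : Polynomial ℂ ⊗[ℂ] Polynomial ℂ)), ← nsmul_eq_mul,
    ← Nat.cast_smul_eq_nsmul ℂ]
  simp only [← TensorProduct.smul_tmul', mul_smul_comm, Algebra.TensorProduct.tmul_mul_tmul,
    one_mul, smul_smul]
  rw [mul_comm]

lemma wittH2 (lam a2 : ℂ) (m : ℤ) (j : ℕ) :
    TensorProduct.map LinearMap.id (wittL lam a2 m) (wittS ^ j) =
      lam ^ m • (((1 : ℂ[X]) ⊗ₜ[ℂ] (X + C ((m : ℂ) * a2))) *
        ((1 : ℂ[X]) ⊗ₜ[ℂ] (X - C (m : ℂ)) + X ⊗ₜ[ℂ] (1 : ℂ[X])) ^ j) := by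
  rw [wittS_pow, map_sum, add_pow, Finset.mul_sum, Finset.smul_sum]
  refine Finset.sum_congr rfl fun t ht => ?_
  rw [map_smul, TensorProduct.map_tmul, wittL_monomial]
  simp only [LinearMap.id_coe, id_eq, Algebra.TensorProduct.tmul_pow,
    Algebra.TensorProduct.tmul_mul_tmul, one_pow, mul_one, one_mul]
  rw [mul_comm _ ((j.choose t : Polynomial ℂ ⊗[ℂ] Polynomial ℂ)), ← nsmul_eq_mul,
    ← Nat.cast_smul_eq_nsmul ℂ]
  simp only [← TensorProduct.tmul_smul, mul_smul_comm, Algebra.TensorProduct.tmul_mul_tmul,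
    one_mul, smul_smul, TensorProduct.tmul_smul]
  rw [mul_comm]

lemma wittE3 (c1 c2 : ℂ) : (X + C c1) ⊗ₜ[ℂ] (1 : ℂ[X]) + (1 : ℂ[X]) ⊗ₜ[ℂ] (X + C c2)
    = wittS + algebraMap ℂ (Polynomial ℂ ⊗[ℂ] Polynomial ℂ) (c1 + c2) := by
  rw [wittS, map_add, Algebra.TensorProduct.algebraMap_apply,
    Algebra.TensorProduct.algebraMap_apply, TensorProduct.add_tmul, TensorProduct.tmul_add]
  have h : ∀ c : ℂ, (C c : ℂ[X]) = c • 1 := fun c => by simp [Algebra.smul_def, algebraMap_eq]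
  have h2 : ∀ c : ℂ, algebraMap ℂ ℂ[X] c = C c := fun c => rfl
  rw [h2, h2, h c1, h c2]
  simp only [TensorProduct.tmul_smul, TensorProduct.smul_tmul']
  abel

lemma wittSmul (c : ℂ) (x : Polynomial ℂ ⊗[ℂ] Polynomial ℂ) :
    c • x = algebraMap ℂ (Polynomial ℂ ⊗[ℂ] Polynomial ℂ) c * x := Algebra.smul_def c x

lemma wittKey (lam a1 a2 : ℂ) (m : ℤ) (j : ℕ) :
    wittLtensor lam a1 a2 m (wittS ^ j) ∈ wittU := by
  have hsub : wittS - algebraMap ℂ (Polynomial ℂ ⊗[ℂ] Polynomial ℂ) (m : ℂ)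
      = wittS + algebraMap ℂ (Polynomial ℂ ⊗[ℂ] Polynomial ℂ) (-(m : ℂ)) := by
    rw [map_neg, sub_eq_add_neg]
  have key : wittLtensor lam a1 a2 m (wittS ^ j) =
      lam ^ m • ((wittS + algebraMap ℂ _ ((m : ℂ) * a1 + (m : ℂ) * a2)) *
        (wittS - algebraMap ℂ _ (m : ℂ)) ^ j) := by
    rw [wittLtensor, LinearMap.add_apply, wittH1, wittH2, wittE1, wittE2, ← smul_add,
      ← add_mul, wittE3]
  rw [key, hsub]
  have expand : (wittS + algebraMap ℂ (Polynomial ℂ ⊗[ℂ] Polynomial ℂ)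
        ((m : ℂ) * a1 + (m : ℂ) * a2)) *
      (wittS + algebraMap ℂ (Polynomial ℂ ⊗[ℂ] Polynomial ℂ) (-(m : ℂ))) ^ j =
    (wittS + algebraMap ℂ (Polynomial ℂ ⊗[ℂ] Polynomial ℂ) (-(m : ℂ))) ^ (j + 1) +
      ((m : ℂ) * a1 + (m : ℂ) * a2 + (m : ℂ)) •
        (wittS + algebraMap ℂ (Polynomial ℂ ⊗[ℂ] Polynomial ℂ) (-(m : ℂ))) ^ j := by
    simp only [wittSmul, pow_succ, map_add, map_neg, map_mul]
    ring
  rw [expand]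
  exact Submodule.smul_mem _ _ (Submodule.add_mem _ (wittShift_pow_mem _ _)
    (Submodule.smul_mem _ _ (wittShift_pow_mem _ _)))

/-- Evaluation at `(1, -1)`. -/
noncomputable def wittEv1 : Polynomial ℂ ⊗[ℂ] Polynomial ℂ →ₐ[ℂ] ℂ :=
  Algebra.TensorProduct.lift (aeval 1) (aeval (-1)) (fun x y => Commute.all _ _)

/-- Evaluation at `(0, 0)`. -/
noncomputable def wittEv2 : Polynomial ℂ ⊗[ℂ] Polynomial ℂ →ₐ[ℂ] ℂ :=
  Algebra.TensorProduct.lift (aeval 0) (aeval 0) (fun x y => Commute.all _ _)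

noncomputable def wittT : Polynomial ℂ ⊗[ℂ] Polynomial ℂ →ₗ[ℂ] ℂ :=
  wittEv1.toLinearMap - wittEv2.toLinearMap

lemma wittT_S_pow (j : ℕ) : wittT (wittS ^ j) = 0 := by
  have h1 : wittEv1 wittS = 0 := by
    simp [wittEv1, wittS, Algebra.TensorProduct.lift_tmul]
  have h2 : wittEv2 wittS = 0 := by
    simp [wittEv2, wittS, Algebra.TensorProduct.lift_tmul]
  simp [wittT, map_pow, h1, h2]

lemma wittU_le_ker : wittU ≤ LinearMap.ker wittT := by
  rw [wittU, Submodule.span_le]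
  rintro x ⟨j, rfl⟩
  rw [← wittS_pow]
  exact wittT_S_pow j

theorem stmt10 (lam a1 a2 : ℂ) (hlam : lam ≠ 0) :
    (∀ m : ℤ, ∀ u ∈ wittU, wittLtensor lam a1 a2 m u ∈ wittU) ∧
      wittU ≠ ⊥ ∧ wittU ≠ ⊤ := by
  refine ⟨?_, ?_, ?_⟩
  · intro m u hu
    have hle : wittU ≤ wittU.comap (wittLtensor lam a1 a2 m) := by
      rw [wittU, Submodule.span_le]
      rintro x ⟨j, rfl⟩
      simp only [SetLike.mem_coe, Submodule.mem_comap]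
      rw [← wittS_pow, ← wittU]
      exact wittKey lam a1 a2 m j
    exact hle hu
  · intro hbot
    have h1 : (1 : Polynomial ℂ ⊗[ℂ] Polynomial ℂ) ∈ wittU := by
      simpa using wittS_pow_mem 0
    rw [hbot, Submodule.mem_bot] at h1
    have := congrArg wittEv2 h1
    simp at this
  · intro htop
    have hx : (X ⊗ₜ[ℂ] (1 : ℂ[X]) : Polynomial ℂ ⊗[ℂ] Polynomial ℂ) ∈ wittU := by
      rw [htop]; trivial
    have := wittU_le_ker hx
    rw [LinearMap.mem_ker] at this
    simp [wittT, wittEv1, wittEv2, Algebra.TensorProduct.lift_tmul] at this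
end

section
/- In the polynomial tensor product ℂ[X,Y]⊗ℂ[S,T], for all natural numbers i, j, k and complex number m: Σ_{t=0}^{j} C(j,t)·( X^i(Y-m)^{j-t}Y ⊗ S^k T^t + X^i Y^{j-t} ⊗ S^k(T-m)^t T ) = Σ_{t=0}^{j} (-m)^t C(j,t) · Σ_{l=0}^{j+1-t} C(j+1-t, l) · X^i Y^{j+1-t-l} ⊗ S^k T^l. -/
/-!
In the commutative algebra `A ⊗[R] B` put `u = y ⊗ 1`, `v = 1 ⊗ s` and `c = algebraMap m`,
so that `y - m` and `s - m` become `u - c` and `v - c`. By the binomial theorem the two halves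
of the left-hand side are `(a ⊗ b) u (u + v - c)^j` and `(a ⊗ b) v (u + v - c)^j`, while
the inner sums of the right-hand side are `(a ⊗ b) (u + v)^(j + 1 - t)`; expanding
`(u + v - c)^j = (-c + (u + v))^j` shows that both sides equal `(a ⊗ b) (u + v) (u + v - c)^j`.
-/

open scoped TensorProduct
open MvPolynomial Finset

section CommRing

variable {R : Type*} [CommRing R]

theorem sum_choose_mul_sub_pow_add_sub_pow (j : ℕ) (a b u v c : R) :
    ∑ t ∈ range (j + 1), (j.choose t : R) *
        (a * (u - c) ^ (j - t) * u * (b * v ^ t) + a * u ^ (j - t) * (b * (v - c) ^ t * v)) =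
      a * b * (u + v) * (u + v - c) ^ j := by
  have left :
      ∑ t ∈ range (j + 1), (j.choose t : R) * (a * (u - c) ^ (j - t) * u * (b * v ^ t)) =
        a * b * u * (v + (u - c)) ^ j := by
    rw [add_pow, mul_sum]
    exact sum_congr rfl fun t _ => by ring
  have right :
      ∑ t ∈ range (j + 1), (j.choose t : R) * (a * u ^ (j - t) * (b * (v - c) ^ t * v)) =
        a * b * v * ((v - c) + u) ^ j := by
    rw [add_pow, mul_sum]
    exact sum_congr rfl fun t _ => by ring
  simp only [mul_add, sum_add_distrib, left, right]
  rw [show v + (u - c) = u + v - c by ring, show v - c + u = u + v - c by ring]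
  ring

theorem sum_neg_pow_mul_choose_mul_sum_choose (j : ℕ) (a b u v c : R) :
    ∑ t ∈ range (j + 1), ((-c) ^ t * (j.choose t : R)) *
        ∑ l ∈ range (j + 1 - t + 1),
          ((j + 1 - t).choose l : R) * (a * u ^ (j + 1 - t - l) * (b * v ^ l)) =
      a * b * (u + v) * (u + v - c) ^ j := by
  have inner (n : ℕ) :
      ∑ l ∈ range (n + 1), (n.choose l : R) * (a * u ^ (n - l) * (b * v ^ l)) =
        a * b * (v + u) ^ n := by
    rw [add_pow, mul_sum]
    exact sum_congr rfl fun l _ => by ring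
  rw [show u + v - c = -c + (u + v) by ring, add_pow, mul_sum]
  refine sum_congr rfl fun t ht => ?_
  rw [inner, show j + 1 - t = j - t + 1 by have := mem_range.mp ht; omega]
  ring

end CommRing

theorem sum_choose_smul_tmul_sub_pow {R A B : Type*} [CommRing R] [CommRing A] [CommRing B]
    [Algebra R A] [Algebra R B] (j : ℕ) (a y : A) (b s : B) (m : R) :
    ∑ t ∈ range (j + 1), (j.choose t : R) •
        ((a * (y - algebraMap R A m) ^ (j - t) * y) ⊗ₜ[R] (b * s ^ t) +
          (a * y ^ (j - t)) ⊗ₜ[R] (b * (s - algebraMap R B m) ^ t * s)) =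
      ∑ t ∈ range (j + 1), ((-m) ^ t * (j.choose t : R)) •
        ∑ l ∈ range (j + 1 - t + 1), ((j + 1 - t).choose l : R) •
          ((a * y ^ (j + 1 - t - l)) ⊗ₜ[R] (b * s ^ l)) := by
  let inl := Algebra.TensorProduct.includeLeft (R := R) (S := R) (A := A) (B := B)
  let inr := Algebra.TensorProduct.includeRight (R := R) (A := A) (B := B)
  have tmul_eq (p : A) (q : B) : p ⊗ₜ[R] q = inl p * inr q := by
    simp [inl, inr, Algebra.TensorProduct.tmul_mul_tmul]
  simp only [tmul_eq, Algebra.smul_def, map_mul, map_pow, map_sub, map_neg, map_natCast,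
    AlgHom.commutes]
  rw [sum_choose_mul_sub_pow_add_sub_pow, sum_neg_pow_mul_choose_mul_sum_choose]

theorem stmt12 (i j k : ℕ) (m : ℂ) :
    (∑ t ∈ Finset.range (j + 1), (j.choose t : ℂ) •
        ((((X 0) ^ i * (X 1 - C m) ^ (j - t) * X 1 : MvPolynomial (Fin 2) ℂ) ⊗ₜ[ℂ]
            ((X 0) ^ k * (X 1) ^ t : MvPolynomial (Fin 2) ℂ))
          + (((X 0) ^ i * (X 1) ^ (j - t) : MvPolynomial (Fin 2) ℂ) ⊗ₜ[ℂ]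
            ((X 0) ^ k * (X 1 - C m) ^ t * X 1 : MvPolynomial (Fin 2) ℂ)))
      : MvPolynomial (Fin 2) ℂ ⊗[ℂ] MvPolynomial (Fin 2) ℂ) =
    ∑ t ∈ Finset.range (j + 1), ((-m) ^ t * (j.choose t : ℂ)) •
      ∑ l ∈ Finset.range (j + 1 - t + 1), ((j + 1 - t).choose l : ℂ) •
        (((X 0) ^ i * (X 1) ^ (j + 1 - t - l) : MvPolynomial (Fin 2) ℂ) ⊗ₜ[ℂ]
          ((X 0) ^ k * (X 1) ^ l : MvPolynomial (Fin 2) ℂ)) := by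
  -- `C m` is `algebraMap ℂ _ m` up to unfolding
  exact sum_choose_smul_tmul_sub_pow j ((X 0) ^ i) (X 1) ((X 0) ^ k) (X 1) m
end

section
/- Let λ be a nonzero complex number, α a complex number, and define on ℂ[Y] the Witt algebra action L_m f(Y) = λ^m (Y + mα) f(Y-m). Then for all m, n ∈ ℤ, the commutator satisfies [L_m, L_n] f = (n-m) L_{m+n} f for all f ∈ ℂ[Y]. -/
open Polynomial

theorem stmt18 (lam al : ℂ) (hlam : lam ≠ 0) (m n : ℤ) (f : Polynomial ℂ) :
    wittL lam al m (wittL lam al n f) - wittL lam al n (wittL lam al m f)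
      = ((n : ℂ) - (m : ℂ)) • wittL lam al (m + n) f := by
  have hcomp : ∀ a b : ℤ, (aeval (X - C (a : ℂ))) ((aeval (X - C (b : ℂ))) f)
      = aeval (X - (C (a : ℂ) + C (b : ℂ))) f := by
    intro a b
    rw [← Polynomial.aeval_algHom_apply]
    simp [map_sub, sub_sub]
  simp only [wittL, LinearMap.smul_apply, LinearMap.coe_comp, Function.comp_apply,
    AlgHom.toLinearMap_apply, LinearMap.mulLeft_apply, map_smul, map_mul, map_add, map_sub,
    Polynomial.aeval_X, Polynomial.aeval_C, hcomp]
  rw [smul_smul, smul_smul, mul_comm (lam ^ n), ← smul_sub, ← zpow_add₀ hlam, smul_smul,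
    mul_comm ((n:ℂ) - m), ← smul_smul, add_comm (C (n:ℂ))]
  congr 1
  push_cast
  simp only [Polynomial.algebraMap_eq, Polynomial.smul_eq_C_mul, map_add, map_mul, map_sub]
  ring
end

section
/- Let λ₁ ≠ λ₂ be nonzero complex numbers, σ₁, σ₂ nonzero complex numbers. Suppose v is a nonzero element of ℂ[X,Y]⊗ℂ[X₁,Y₁] of degree (0,0,0,t') with t' > 0 in the total order on ℕ⁴ (ordered by total weight, then 4th, 3rd, 2nd, 1st coordinates). Define I_m v by the diagonal action I_m(f⊗g) = λ₁^m σ₁ f(X-1,Y-m)⊗g + λ₂^m σ₂ f⊗g(X₁-1,Y₁-m). Then there exists m ∈ {0,1,2,3} such that I_m v - λ₁^m σ₁ v - λ₂^m σ₂ v is nonzero of degree (0,0,0,t'-1). -/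
open MvPolynomial

/-- The key of the total order `≻` on `ℕ⁴` from the paper: compare first by total weight,
then by the 4th, 3rd, 2nd and 1st coordinates, lexicographically. -/
def degKey (a : Fin 4 → ℕ) : ℕ ×ₗ ℕ ×ₗ ℕ ×ₗ ℕ ×ₗ ℕ :=
  toLex (a 0 + a 1 + a 2 + a 3, toLex (a 3, toLex (a 2, toLex (a 1, a 0))))

/-- `v` (an element of `ℂ[X,Y] ⊗ ℂ[X₁,Y₁]`, identified with `ℂ[X,Y,X₁,Y₁]`) is nonzero of
degree `d` with respect to the total order `≻` on `ℕ⁴`: the coefficient at `d` is nonzero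
and every exponent vector in the support is `≼ d`. -/
def hasDeg (v : MvPolynomial (Fin 4) ℂ) (d : Fin 4 → ℕ) : Prop :=
  MvPolynomial.coeff (Finsupp.equivFunOnFinite.symm d) v ≠ 0 ∧
    ∀ a ∈ v.support, degKey ⇑a ≤ degKey d

/-- The diagonal action of `I_m` on `ℂ[X,Y] ⊗ ℂ[X₁,Y₁]` (identified with `ℂ[X,Y,X₁,Y₁]`):
`I_m(f ⊗ g) = λ₁^m σ₁ f(X-1, Y-m) ⊗ g + λ₂^m σ₂ f ⊗ g(X₁-1, Y₁-m)`. -/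
noncomputable def Iop (l1 l2 s1 s2 : ℂ) (m : ℤ) :
    MvPolynomial (Fin 4) ℂ →ₗ[ℂ] MvPolynomial (Fin 4) ℂ :=
  (l1 ^ m * s1) • (aeval ![X 0 - 1, X 1 - C (m : ℂ), X 2, X 3] :
      MvPolynomial (Fin 4) ℂ →ₐ[ℂ] MvPolynomial (Fin 4) ℂ).toLinearMap +
  (l2 ^ m * s2) • (aeval ![X 0, X 1, X 2 - 1, X 3 - C (m : ℂ)] :
      MvPolynomial (Fin 4) ℂ →ₐ[ℂ] MvPolynomial (Fin 4) ℂ).toLinearMap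

/-!
Since `(0,0,0,d)` is the largest exponent of total weight `d`, `hasDeg p ![0,0,0,d]` just says
that `p` has total degree `≤ d` and a nonzero coefficient at `Y₁^d`.

With `T_c` the translation `Xᵢ ↦ Xᵢ + cᵢ`, the operator of the theorem is
`λ₁^m σ₁ (T_{(-1,-m,0,0)} - 1) + λ₂^m σ₂ (T_{(0,0,-1,-m)} - 1)`. By the first-order Taylor
expansion, `T_c v - v` has total degree `≤ deg v - 1`, with the same part of that degree as
`∑ cᵢ ∂ᵢ v`. So the coefficient at `Y₁^(t'-1)` is `λ₁^m (a + m b) + λ₂^m (g + m k)` with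
`k = -σ₂ t' · coeff_{Y₁^t'} v ≠ 0`, and such an expression cannot vanish at `m = 0, 1, 2, 3`
since `λ₁ ≠ λ₂` and `λ₂ ≠ 0`.
-/

namespace MvPolynomial

variable {σ R : Type*} [CommRing R]

theorem totalDegree_mul_X {p : MvPolynomial σ R} (hp : p ≠ 0) (i : σ) :
    (p * X i).totalDegree = p.totalDegree + 1 := by
  have : Nontrivial R :=
    (subsingleton_or_nontrivial R).resolve_left fun _ => hp (Subsingleton.elim _ _)
  refine le_antisymm ((totalDegree_mul _ _).trans (by rw [totalDegree_X])) ?_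
  obtain ⟨s, hs, hmax⟩ := Finset.exists_mem_eq_sup _ (support_nonempty.mpr hp)
    fun s => s.sum fun _ e => e
  have hsX : s + Finsupp.single i 1 ∈ (p * X i).support := by
    rw [mem_support_iff, coeff_mul_X]
    exact mem_support_iff.mp hs
  have := le_totalDegree hsX
  rw [Finsupp.sum_add_index' (fun _ => rfl) (fun _ _ _ => rfl),
    Finsupp.sum_single_index rfl] at this
  rwa [totalDegree, hmax]

theorem coeff_mul_X_eq_zero {q : MvPolynomial σ R} {e : σ →₀ ℕ} {i : σ}
    (h : ∀ e', e = e' + Finsupp.single i 1 → coeff e' q = 0) : coeff e (q * X i) = 0 := by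
  classical
  rw [coeff_mul_X']
  split_ifs with hi
  · exact h _ (tsub_add_cancel_of_le (Finsupp.single_le_iff.mpr
      (Nat.one_le_iff_ne_zero.mpr (Finsupp.mem_support_iff.mp hi)))).symm
  · rfl

noncomputable def translation (c : σ → R) : MvPolynomial σ R →ₐ[R] MvPolynomial σ R :=
  aeval fun i => X i + C (c i)

variable (c : σ → R)

theorem translation_mul_X_sub (p : MvPolynomial σ R) (i : σ) :
    translation c (p * X i) - p * X i
      = (translation c p - p) * X i + C (c i) * (translation c p - p) + C (c i) * p := by
  simp only [translation, map_mul, aeval_X]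
  ring

theorem coeff_translation_monomial_sub_eq_zero (s : σ →₀ ℕ) (a : R) :
    ∀ e : σ →₀ ℕ, (monomial s a).totalDegree ≤ e.degree →
      coeff e (translation c (monomial s a) - monomial s a) = 0 := by
  refine induction_on_monomial (motive := fun p => ∀ e : σ →₀ ℕ, p.totalDegree ≤ e.degree →
    coeff e (translation c p - p) = 0) (fun a e _ => by simp [translation]) ?_ s a
  intro p i ih e he
  rcases eq_or_ne p 0 with rfl | hp
  · simp
  rw [totalDegree_mul_X hp] at he
  rw [translation_mul_X_sub, coeff_add, coeff_add, coeff_C_mul, coeff_C_mul, ih e (by omega),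
    coeff_eq_zero_of_totalDegree_lt (f := p) (d := e) (by rw [← Finsupp.degree_apply]; omega),
    mul_zero, add_zero, add_zero]
  refine coeff_mul_X_eq_zero fun e' he' => ih e' ?_
  rw [he', map_add, Finsupp.degree_single] at he
  omega

theorem coeff_translation_sub_eq_zero {p : MvPolynomial σ R} {e : σ →₀ ℕ}
    (hp : p.totalDegree ≤ e.degree) : coeff e (translation c p - p) = 0 := by
  rw [p.as_sum, map_sum, ← Finset.sum_sub_distrib, coeff_sum]
  exact Finset.sum_eq_zero fun s hs => coeff_translation_monomial_sub_eq_zero c s _ e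
    ((totalDegree_monomial_le _ _).trans ((le_totalDegree hs).trans hp))

theorem totalDegree_translation_sub_le {p : MvPolynomial σ R} {n : ℕ}
    (hp : p.totalDegree ≤ n + 1) : (translation c p - p).totalDegree ≤ n := by
  refine Finset.sup_le fun s hs => ?_
  by_contra! h
  exact mem_support_iff.mp hs (coeff_translation_sub_eq_zero c (hp.trans h))

variable [Fintype σ]

theorem translation_mul_X_sub_sub_pderiv (p : MvPolynomial σ R) (i : σ) :
    translation c (p * X i) - p * X i - ∑ j, c j • pderiv j (p * X i)
      = (translation c p - p - ∑ j, c j • pderiv j p) * X i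
        + C (c i) * (translation c p - p) := by
  classical
  have hsum : ∑ j, c j • pderiv j (p * X i) = (∑ j, c j • pderiv j p) * X i + C (c i) * p := by
    simp only [pderiv_mul, pderiv_X, Pi.single_apply, smul_add, Finset.sum_add_distrib,
      Finset.sum_mul, smul_mul_assoc]
    simp [smul_eq_C_mul]
  rw [hsum, translation_mul_X_sub]
  ring

theorem coeff_translation_monomial_sub_sub_pderiv_eq_zero (s : σ →₀ ℕ) (a : R) :
    ∀ e : σ →₀ ℕ, (monomial s a).totalDegree ≤ e.degree + 1 →
      coeff e (translation c (monomial s a) - monomial s a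
        - ∑ j, c j • pderiv j (monomial s a)) = 0 := by
  refine induction_on_monomial (motive := fun p => ∀ e : σ →₀ ℕ, p.totalDegree ≤ e.degree + 1 →
    coeff e (translation c p - p - ∑ j, c j • pderiv j p) = 0)
    (fun a e _ => by simp [translation]) ?_ s a
  intro p i ih e he
  rcases eq_or_ne p 0 with rfl | hp
  · simp
  rw [totalDegree_mul_X hp] at he
  rw [translation_mul_X_sub_sub_pderiv, coeff_add, coeff_C_mul,
    coeff_translation_sub_eq_zero c (by omega), mul_zero, add_zero]
  refine coeff_mul_X_eq_zero fun e' he' => ih e' ?_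
  rw [he', map_add, Finsupp.degree_single] at he
  omega

theorem coeff_translation_sub {p : MvPolynomial σ R} {e : σ →₀ ℕ}
    (hp : p.totalDegree ≤ e.degree + 1) :
    coeff e (translation c p - p) = ∑ j, c j * (coeff (e + Finsupp.single j 1) p * (e j + 1)) := by
  have hrem : coeff e (translation c p - p - ∑ j, c j • pderiv j p) = 0 := by
    conv_lhs => rw [p.as_sum]
    simp only [map_sum, Finset.smul_sum]
    rw [Finset.sum_comm (γ := σ), ← Finset.sum_sub_distrib, ← Finset.sum_sub_distrib, coeff_sum]
    exact Finset.sum_eq_zero fun s hs => coeff_translation_monomial_sub_sub_pderiv_eq_zero c s _ e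
      ((totalDegree_monomial_le _ _).trans ((le_totalDegree hs).trans hp))
  rw [coeff_sub, sub_eq_zero, coeff_sum] at hrem
  simp [hrem, coeff_pderiv]

end MvPolynomial

theorem degKey_le_degKey_iff (a : Fin 4 → ℕ) (n : ℕ) :
    degKey a ≤ degKey ![0, 0, 0, n] ↔ a 0 + a 1 + a 2 + a 3 ≤ n := by
  simp only [degKey, Prod.Lex.toLex_le_toLex, Matrix.cons_val_zero, Matrix.cons_val_one,
    Matrix.cons_val_two, Matrix.cons_val_three, Matrix.head_cons, Matrix.tail_cons]
  omega

theorem hasDeg_iff (p : MvPolynomial (Fin 4) ℂ) (n : ℕ) :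
    hasDeg p ![0, 0, 0, n] ↔ coeff (Finsupp.single 3 n) p ≠ 0 ∧ p.totalDegree ≤ n := by
  have hd : Finsupp.equivFunOnFinite.symm ![0, 0, 0, n] = Finsupp.single (3 : Fin 4) n := by
    ext i
    fin_cases i <;> simp
  simp only [hasDeg, hd, totalDegree, Finset.sup_le_iff, degKey_le_degKey_iff]
  refine and_congr_right' (forall₂_congr fun a _ => ?_)
  rw [Finsupp.sum_fintype _ _ (fun _ => rfl), Fin.sum_univ_four]

theorem eq_zero_of_forall_lt_four_pow_mul_add_eq_zero {K : Type*} [Field K] {l1 l2 a b g k : K}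
    (h2 : l2 ≠ 0) (h12 : l1 ≠ l2)
    (h : ∀ m : ℕ, m < 4 → l1 ^ m * (a + m * b) + l2 ^ m * (g + m * k) = 0) : k = 0 := by
  have e0 := h 0 (by norm_num)
  have e1 := h 1 (by norm_num)
  have e2 := h 2 (by norm_num)
  have e3 := h 3 (by norm_num)
  push_cast at e0 e1 e2 e3
  -- apply `(S - l1)² (S - l2)`, `S` the shift `m ↦ m + 1`: it kills every term but `l2 ^ m * m * k`
  have hk : l2 * (l1 - l2) ^ 2 * k = 0 := by
    linear_combination (l1 ^ 2 + 2 * l1 * l2) * e1 - (l2 + 2 * l1) * e2 + e3 - l1 ^ 2 * l2 * e0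
  exact (mul_eq_zero.mp hk).resolve_left (mul_ne_zero h2 (pow_ne_zero _ (sub_ne_zero.mpr h12)))

section Iop

variable (l1 l2 s1 s2 : ℂ)

theorem Iop_sub_smul_sub_smul (m : ℤ) (v : MvPolynomial (Fin 4) ℂ) :
    Iop l1 l2 s1 s2 m v - (l1 ^ m * s1) • v - (l2 ^ m * s2) • v
      = (l1 ^ m * s1) • (translation ![-1, -(m : ℂ), 0, 0] v - v)
        + (l2 ^ m * s2) • (translation ![0, 0, -1, -(m : ℂ)] v - v) := by
  have h1 : (aeval ![X 0 - 1, X 1 - C (m : ℂ), X 2, X 3] :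
      MvPolynomial (Fin 4) ℂ →ₐ[ℂ] MvPolynomial (Fin 4) ℂ) = translation ![-1, -(m : ℂ), 0, 0] := by
    unfold translation
    congr 1
    funext i
    fin_cases i <;> simp [sub_eq_add_neg]
  have h2 : (aeval ![X 0, X 1, X 2 - 1, X 3 - C (m : ℂ)] :
      MvPolynomial (Fin 4) ℂ →ₐ[ℂ] MvPolynomial (Fin 4) ℂ) = translation ![0, 0, -1, -(m : ℂ)] := by
    unfold translation
    congr 1
    funext i
    fin_cases i <;> simp [sub_eq_add_neg]
  simp only [Iop, LinearMap.add_apply, LinearMap.smul_apply, AlgHom.toLinearMap_apply, h1, h2,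
    smul_sub]
  abel

variable {v : MvPolynomial (Fin 4) ℂ} {n : ℕ}

theorem totalDegree_Iop_sub_smul_sub_smul_le (m : ℤ) (hv : v.totalDegree ≤ n + 1) :
    (Iop l1 l2 s1 s2 m v - (l1 ^ m * s1) • v - (l2 ^ m * s2) • v).totalDegree ≤ n := by
  rw [Iop_sub_smul_sub_smul]
  exact (totalDegree_add _ _).trans (max_le
    ((totalDegree_smul_le _ _).trans (totalDegree_translation_sub_le _ hv))
    ((totalDegree_smul_le _ _).trans (totalDegree_translation_sub_le _ hv)))

theorem coeff_Iop_sub_smul_sub_smul (m : ℤ) (hv : v.totalDegree ≤ n + 1) :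
    coeff (Finsupp.single 3 n) (Iop l1 l2 s1 s2 m v - (l1 ^ m * s1) • v - (l2 ^ m * s2) • v)
      = -(l1 ^ m * (s1 * coeff (Finsupp.single 3 n + Finsupp.single 0 1) v
            + m * (s1 * coeff (Finsupp.single 3 n + Finsupp.single 1 1) v))
          + l2 ^ m * (s2 * coeff (Finsupp.single 3 n + Finsupp.single 2 1) v
            + m * (s2 * (n + 1) * coeff (Finsupp.single 3 (n + 1)) v))) := by
  have hv' : v.totalDegree ≤ (Finsupp.single (3 : Fin 4) n).degree + 1 := by
    rwa [Finsupp.degree_single]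
  rw [Iop_sub_smul_sub_smul, coeff_add, coeff_smul, coeff_smul, coeff_translation_sub _ hv',
    coeff_translation_sub _ hv']
  simp only [Fin.sum_univ_four, Matrix.cons_val_zero, Matrix.cons_val_one, Matrix.cons_val,
    Finsupp.single_eq_same, ne_eq, Fin.reduceEq, not_false_eq_true, Finsupp.single_eq_of_ne,
    ← Finsupp.single_add, smul_eq_mul]
  push_cast
  ring

end Iop

theorem stmt19_general (l1 l2 s1 s2 : ℂ) (h2 : l2 ≠ 0) (h12 : l1 ≠ l2)
    (hs2 : s2 ≠ 0) (t' : ℕ) (ht : 0 < t')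
    (v : MvPolynomial (Fin 4) ℂ) (hv : hasDeg v ![0, 0, 0, t']) :
    ∃ m : ℤ, m ∈ ({0, 1, 2, 3} : Set ℤ) ∧
      hasDeg (Iop l1 l2 s1 s2 m v - (l1 ^ m * s1) • v - (l2 ^ m * s2) • v)
        ![0, 0, 0, t' - 1] := by
  obtain ⟨n, rfl⟩ : ∃ n, t' = n + 1 := ⟨t' - 1, by omega⟩
  obtain ⟨hlead, hdeg⟩ := (hasDeg_iff v (n + 1)).mp hv
  simp only [add_tsub_cancel_right, hasDeg_iff]
  by_contra! h
  have hvanish : ∀ k : ℕ, k < 4 → l1 ^ k * (s1 * coeff (Finsupp.single 3 n + Finsupp.single 0 1) v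
      + k * (s1 * coeff (Finsupp.single 3 n + Finsupp.single 1 1) v))
      + l2 ^ k * (s2 * coeff (Finsupp.single 3 n + Finsupp.single 2 1) v
      + k * (s2 * (n + 1) * coeff (Finsupp.single 3 (n + 1)) v)) = 0 := by
    intro k hk
    have hk' : (k : ℤ) ∈ ({0, 1, 2, 3} : Set ℤ) := by interval_cases k <;> simp
    have := not_not.mp fun hne =>
      (h k hk' hne).not_ge (totalDegree_Iop_sub_smul_sub_smul_le l1 l2 s1 s2 k hdeg)
    rwa [coeff_Iop_sub_smul_sub_smul l1 l2 s1 s2 k hdeg, neg_eq_zero, zpow_natCast,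
      zpow_natCast, Int.cast_natCast] at this
  have := eq_zero_of_forall_lt_four_pow_mul_add_eq_zero h2 h12 hvanish
  exact mul_ne_zero (mul_ne_zero hs2 (Nat.cast_add_one_ne_zero n)) hlead this

theorem stmt19 (l1 l2 s1 s2 : ℂ) (h1 : l1 ≠ 0) (h2 : l2 ≠ 0) (h12 : l1 ≠ l2)
    (hs1 : s1 ≠ 0) (hs2 : s2 ≠ 0) (t' : ℕ) (ht : 0 < t')
    (v : MvPolynomial (Fin 4) ℂ) (hv : hasDeg v ![0, 0, 0, t']) :
    ∃ m : ℤ, m ∈ ({0, 1, 2, 3} : Set ℤ) ∧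
      hasDeg (Iop l1 l2 s1 s2 m v - (l1 ^ m * s1) • v - (l2 ^ m * s2) • v)
        ![0, 0, 0, t' - 1] :=
  stmt19_general l1 l2 s1 s2 h2 h12 hs2 t' ht v hv
end
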